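/- If u, v, and uv are all lower Christoffel words, then both u²v and uv² are lower Christoffel words. -/

import Mathlib

/-- A finite binary word is balanced if the numbers of occurrences of `true`
in any two factors of equal length differ by at most 1. -/
def BalancedWord (w : List Bool) : Prop :=
  ∀ u v : List Bool, u <:+: w → v <:+: w → u.length = v.length →
    u.count true ≤ v.count true + 1

/-- A word `u` is central if it is a palindrome and both `0u1` and `1u0` are balanced. -/
def Central (u : List Bool) : Prop :=
  u.reverse = u ∧ BalancedWord (false :: (u ++ [true])) ∧ BalancedWord (true :: (u ++ [false]))

/-- Lower Christoffel words: the letters `0`, `1` and the words `0u1` with `u` central. -/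
def IsLowerChristoffel (v : List Bool) : Prop :=
  v = [false] ∨ v = [true] ∨ ∃ u, Central u ∧ v = false :: (u ++ [true])

/-- Upper Christoffel words: the letters `0`, `1` and the words `1u0` with `u` central. -/
def IsUpperChristoffel (v : List Bool) : Prop :=
  v = [false] ∨ v = [true] ∨ ∃ u, Central u ∧ v = true :: (u ++ [false])

/-- Christoffel words (lower or upper). -/
def IsChristoffel (v : List Bool) : Prop := IsLowerChristoffel v ∨ IsUpperChristoffel v

/-!
Read a binary word as a lattice path and let `height w k` be the number of `1`s among its first
`k` letters. The lower Christoffel words of length `n` with `b` ones are exactly the mechanical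
words, `height w k = ⌊k b / n⌋`, with `b` and `n` coprime. For `w = 0m1`, balance and the
palindrome `m` give `p (i + k) - p i ∈ {p k, p k + 1}` and `p k + p (n - k) + 1 = b` for
`p = height w`; summing over the `n` cyclic factors of length `k`, one of which (the suffix)
carries the extra `1`, yields `n p k < k b`, and the same at `n - k` pins `p k = ⌊k b / n⌋`.

For Christoffel words `u` and `v` with `(|u|, |u|₁) = (n₁, b)` and `(|v|, |v|₁) = (n₂, d)`, the
word `uv` is again one exactly when `n₁ d - b n₂ = 1`. The pairs `(u, uv)` and `(uv, v)` have
the same determinant as `(u, v)`, so `u²v` and `uv²` are again Christoffel words.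
-/

lemma Finset.sum_range_sub_shift (f : ℕ → ℤ) (n k : ℕ) :
    ∑ i ∈ Finset.range n, (f (i + k) - f i) = ∑ i ∈ Finset.range k, (f (n + i) - f i) := by
  have h1 := Finset.sum_range_add f k n
  have h2 := Finset.sum_range_add f n k
  simp only [Finset.sum_sub_distrib, add_comm _ k]
  rw [add_comm n k] at h2
  linarith

lemma Nat.coprime_of_forall_not_dvd_mul {b n : ℕ} (hn : 0 < n)
    (h : ∀ k, 0 < k → k < n → ¬ n ∣ k * b) : Nat.Coprime b n := by
  by_contra hg
  set g := Nat.gcd b n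
  obtain ⟨b', hb'⟩ : g ∣ b := Nat.gcd_dvd_left b n
  obtain ⟨n', hn'⟩ : g ∣ n := Nat.gcd_dvd_right b n
  have hg2 : 2 ≤ g := by
    have := Nat.gcd_pos_of_pos_right b hn
    unfold Nat.Coprime at hg
    omega
  have hn'0 : 0 < n' := Nat.pos_of_mul_pos_left (hn'.symm ▸ hn)
  refine h n' hn'0 (by nlinarith) ⟨b', ?_⟩
  calc n' * b = n' * (g * b') := by rw [← hb']
    _ = g * n' * b' := by ring
    _ = n * b' := by rw [← hn']

lemma Nat.div_add_div_sub_add_one {n b k : ℕ} (hbn : Nat.Coprime b n) (hk0 : 0 < k)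
    (hkn : k < n) :
    k * b / n + (n - k) * b / n + 1 = b := by
  have hn : 0 < n := by omega
  have hrem : k * b % n ≠ 0 := fun h =>
    absurd (Nat.le_of_dvd hk0 (hbn.symm.dvd_of_dvd_mul_right (Nat.dvd_of_mod_eq_zero h))) (by omega)
  have hsum : k * b + (n - k) * b = b * n := by rw [← Nat.add_mul, Nat.mul_comm]; congr 1; omega
  have hcarry : n ≤ k * b % n + (n - k) * b % n := Nat.le_of_dvd (by omega)
    (Nat.dvd_of_mod_eq_zero (by rw [← Nat.add_mod, hsum, Nat.mul_mod_left]))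
  have := Nat.add_div_eq_of_le_mod_add_mod hcarry hn
  rw [hsum, Nat.mul_div_cancel _ hn] at this
  omega

lemma IsCoprime.exists_dvd_mul_add {b n : ℤ} (h : IsCoprime b n) (hn : 0 < n) (r : ℤ) :
    ∃ k, 0 < k ∧ k ≤ n ∧ n ∣ k * b + r := by
  obtain ⟨u, v, huv⟩ := h
  refine ⟨(-u * r - 1) % n + 1, by have := Int.emod_nonneg (-u * r - 1) hn.ne'; omega,
    by have := Int.emod_lt_of_pos (-u * r - 1) hn; omega, ⟨r * v - (-u * r - 1) / n * b, ?_⟩⟩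
  rw [Int.emod_def]
  linear_combination -r * huv

lemma BalancedWord.reverse {w : List Bool} (hw : BalancedWord w) : BalancedWord w.reverse :=
  fun u v hu hv hlen => by
    simpa using hw u.reverse v.reverse (by simpa using List.reverse_infix.mpr hu)
      (by simpa using List.reverse_infix.mpr hv) (by simpa using hlen)

namespace Christoffel

def height (w : List Bool) (k : ℕ) : ℕ := (w.take k).count true

@[simp] lemma height_zero (w : List Bool) : height w 0 = 0 := by
  simp [height]

lemma height_of_length_le {w : List Bool} {k : ℕ} (h : w.length ≤ k) :
    height w k = w.count true := by
  simp [height, List.take_of_length_le h]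

lemma height_add (w : List Bool) (i k : ℕ) :
    height w (i + k) = height w i + height (w.drop i) k := by
  simp [height, List.take_add, List.count_append]

@[simp] lemma height_cons_succ (x : Bool) (w : List Bool) (k : ℕ) :
    height (x :: w) (k + 1) = x.toNat + height w k := by
  cases x <;> simp [height, add_comm]

lemma height_append_of_le {u v : List Bool} {k : ℕ} (h : k ≤ u.length) :
    height (u ++ v) k = height u k := by
  simp [height, List.take_append_of_le_length h]

lemma height_append_length_add (u v : List Bool) (j : ℕ) :
    height (u ++ v) (u.length + j) = u.count true + height v j := by
  rw [height_add, height_append_of_le le_rfl, height_of_length_le le_rfl, List.drop_left]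

lemma height_reverse {w : List Bool} {k : ℕ} (h : k ≤ w.length) :
    height w.reverse k + height w (w.length - k) = w.count true := by
  have hrev : w.reverse.take k = (w.drop (w.length - k)).reverse := by
    rw [List.reverse_drop]; congr 1; omega
  rw [height, hrev, List.count_reverse, height, add_comm, ← List.count_append,
    List.take_append_drop]

lemma eq_of_height_eq {u v : List Bool} (hlen : u.length = v.length)
    (h : ∀ k ≤ u.length, height u k = height v k) : u = v := by
  induction u generalizing v with
  | nil => exact (List.length_eq_zero_iff.mp hlen.symm).symm
  | cons x u ih =>
    obtain _ | ⟨y, v⟩ := v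
    · simp at hlen
    have hxy : x = y := by
      have := h 1 (by simp)
      revert this; cases x <;> cases y <;> simp
    subst hxy
    refine congrArg _ (ih (by simpa using hlen) fun k hk => ?_)
    simpa using h (k + 1) (by simpa using hk)

lemma exists_height_eq_of_isInfix {u w : List Bool} (h : u <:+: w) :
    ∃ i, i + u.length ≤ w.length ∧ height w (i + u.length) = height w i + u.count true := by
  obtain ⟨s, t, rfl⟩ := h
  refine ⟨s.length, by simp, ?_⟩
  rw [List.append_assoc, height_append_length_add, height_append_of_le le_rfl,
    height_append_of_le le_rfl, height_of_length_le le_rfl, height_of_length_le le_rfl]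

lemma balancedWord_iff {w : List Bool} :
    BalancedWord w ↔ ∀ i j k, i + k ≤ w.length → j + k ≤ w.length →
      height w (i + k) + height w j ≤ height w (j + k) + height w i + 1 := by
  constructor
  · intro hw i j k hi hj
    have factor_infix : ∀ l, ((w.drop l).take k) <:+: w := fun l =>
      ((List.take_prefix _ _).isInfix).trans (List.drop_suffix _ _).isInfix
    have := hw _ _ (factor_infix i) (factor_infix j) (by simp; omega)
    rw [height_add w i, height_add w j]
    unfold height at this ⊢
    omega
  · intro hw u v hu hv hlen
    obtain ⟨i, hi, hui⟩ := exists_height_eq_of_isInfix hu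
    obtain ⟨j, hj, hvj⟩ := exists_height_eq_of_isInfix hv
    rw [hlen] at hi hui
    have := hw i j v.length hi hj
    omega

lemma height_cons_append_singleton {x y : Bool} {m : List Bool} {k : ℕ} (hk : k ≤ m.length) :
    height (x :: (m ++ [y])) (k + 1) = x.toNat + height m k := by
  rw [height_cons_succ, height_append_of_le hk]

theorem exists_palindrome_eq_iff {w : List Bool} (hw : 2 ≤ w.length) :
    (∃ m, m.reverse = m ∧ w = false :: (m ++ [true])) ↔
      ∀ k, 0 < k → k < w.length → height w.reverse k = height w k + 1 := by
  constructor
  · rintro ⟨m, hm, rfl⟩ k hk0 hkn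
    obtain ⟨k, rfl⟩ : ∃ k', k = k' + 1 := ⟨k - 1, by omega⟩
    have hrev : (false :: (m ++ [true])).reverse = true :: (m ++ [false]) := by simp [hm]
    simp only [List.length_cons, List.length_append, List.length_nil] at hkn
    rw [hrev, height_cons_append_singleton (by omega), height_cons_append_singleton (by omega)]
    simp [add_comm]
  · intro h
    obtain _ | ⟨x, t⟩ := w
    · simp at hw
    obtain rfl | ⟨m, y, rfl⟩ := t.eq_nil_or_concat
    · simp at hw
    rw [List.concat_eq_append] at h hw ⊢
    simp only [List.length_cons, List.length_append,
      List.length_nil] at h hw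
    have hrev : (x :: (m ++ [y])).reverse = y :: (m.reverse ++ [x]) := by simp
    have hends := h 1 Nat.one_pos (by omega)
    rw [hrev, height_cons_succ, height_cons_succ] at hends
    obtain ⟨rfl, rfl⟩ : x = false ∧ y = true := by
      revert hends; cases x <;> cases y <;> simp
    refine ⟨m, eq_of_height_eq (by simp) fun k hk => ?_, rfl⟩
    have := h (k + 1) (by omega) (by simp at hk; omega)
    rw [hrev, height_cons_append_singleton (by simpa using hk),
      height_cons_append_singleton (by simpa using hk)] at this
    simpa [add_comm] using this

lemma mul_lt_mul_of_balanced {p : ℕ → ℕ} {n b k : ℕ} (hk0 : 0 < k) (hkn : k < n)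
    (hp0 : p 0 = 0) (hpn : p n = b)
    (hsuffix : ∀ i, 0 < i → i < n → p i + p (n - i) + 1 = b)
    (hbal : ∀ i j k, i + k ≤ n → j + k ≤ n → p (i + k) + p j ≤ p (j + k) + p i + 1) :
    n * p k < k * b := by
  -- `P` is the height function of `ww`: its `n` factors of length `k` starting in the first `w`
  -- carry `k b` ones in total, at least `p k` each and `p k + 1` for the suffix of `w`.
  let P : ℕ → ℤ := fun i => if i ≤ n then p i else b + p (i - n)
  have hperiod : ∀ i ∈ Finset.range k, P (n + i) - P i = b := by
    intro i hi
    rw [Finset.mem_range] at hi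
    rcases i with _ | i
    · simp [P, hp0, hpn]
    · simp [P, if_neg (show ¬ n + (i + 1) ≤ n by omega), if_pos (show i + 1 ≤ n by omega)]
  have hfactor : ∀ i ∈ Finset.range n,
      (p k : ℤ) + (if i = n - k then 1 else 0) ≤ P (i + k) - P i := by
    intro i hi
    rw [Finset.mem_range] at hi
    simp only [P, if_pos hi.le]
    by_cases hik : i + k ≤ n
    · have hlow := hbal (n - k) i k (by omega) hik
      have hsuf := hsuffix k hk0 hkn
      rw [show n - k + k = n by omega, hpn] at hlow
      rw [if_pos hik]
      split_ifs with hi_eq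
      · subst hi_eq
        rw [show n - k + k = n by omega, hpn]
        omega
      · omega
    · have hsuf := hsuffix i (by omega) hi
      have hup := hbal (n - i) 0 (i + k - n) (by omega) (by omega)
      rw [show n - i + (i + k - n) = k by omega, hp0, zero_add] at hup
      rw [if_neg hik, if_neg (by omega)]
      omega
  have hsum := Finset.sum_le_sum hfactor
  rw [Finset.sum_range_sub_shift, Finset.sum_congr rfl hperiod, Finset.sum_add_distrib,
    Finset.sum_ite_eq' (Finset.range n) (n - k), if_pos (Finset.mem_range.mpr (by omega))] at hsum
  simp only [Finset.sum_const, Finset.card_range, nsmul_eq_mul] at hsum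
  exact_mod_cast (by linarith : (n : ℤ) * p k < k * b)

theorem eq_div_and_coprime_of_balanced {p : ℕ → ℕ} {n b : ℕ} (hn : 0 < n)
    (hp0 : p 0 = 0) (hpn : p n = b)
    (hsuffix : ∀ i, 0 < i → i < n → p i + p (n - i) + 1 = b)
    (hbal : ∀ i j k, i + k ≤ n → j + k ≤ n → p (i + k) + p j ≤ p (j + k) + p i + 1) :
    (∀ k ≤ n, p k = k * b / n) ∧ Nat.Coprime b n := by
  have hbounds : ∀ k, 0 < k → k < n → n * p k < k * b ∧ k * b < n * p k + n := by
    intro k hk0 hkn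
    have hlt := mul_lt_mul_of_balanced (k := n - k) (by omega) (by omega) hp0 hpn hsuffix hbal
    have hsum : n * p (n - k) + n * p k + n = n * b := by rw [← hsuffix k hk0 hkn]; ring
    have hnb : (n - k) * b + k * b = n * b := by rw [← Nat.add_mul, Nat.sub_add_cancel hkn.le]
    exact ⟨mul_lt_mul_of_balanced hk0 hkn hp0 hpn hsuffix hbal, by linarith⟩
  refine ⟨fun k hk => ?_, Nat.coprime_of_forall_not_dvd_mul hn fun k hk0 hkn ⟨c, hc⟩ => ?_⟩
  · rcases Nat.eq_zero_or_pos k with rfl | hk0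
    · simp [hp0]
    rcases hk.lt_or_eq with hkn | rfl
    · have := hbounds k hk0 hkn
      exact (Nat.div_eq_of_lt_le (by linarith) (by linarith)).symm
    · rw [hpn, Nat.mul_div_cancel_left _ hn]
  · have := hbounds k hk0 hkn
    rw [hc] at this
    have h1 := Nat.lt_of_mul_lt_mul_left this.1
    have h2 : c < p k + 1 :=
      Nat.lt_of_mul_lt_mul_left (a := n) (by rw [Nat.mul_add]; linarith [this.2])
    omega

def IsMechanical (w : List Bool) : Prop :=
  ∀ k ≤ w.length, height w k = k * w.count true / w.length

namespace IsMechanical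

variable {w : List Bool}

lemma balancedWord (hw : IsMechanical w) : BalancedWord w := by
  refine balancedWord_iff.mpr fun i j k hi hj => ?_
  rw [hw _ hi, hw _ hj, hw _ (by omega), hw _ (by omega), Nat.add_mul, Nat.add_mul]
  have := Nat.add_div_le_div_add_div_add_one (i * w.count true) (k * w.count true) w.length
  have := Nat.div_add_div_le_add_div (x := j * w.count true) (y := k * w.count true)
    (z := w.length)
  omega

lemma height_reverse_eq (hw : IsMechanical w) (hcop : Nat.Coprime (w.count true) w.length)
    {k : ℕ} (hk0 : 0 < k) (hkn : k < w.length) :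
    height w.reverse k = height w k + 1 := by
  have hrev := Christoffel.height_reverse hkn.le
  rw [hw _ (Nat.sub_le _ _)] at hrev
  rw [hw _ hkn.le]
  have := Nat.div_add_div_sub_add_one hcop hk0 hkn
  omega

theorem isLowerChristoffel (hw : IsMechanical w)
    (hcop : Nat.Coprime (w.count true) w.length) : IsLowerChristoffel w := by
  obtain hn | hn := Nat.lt_or_ge w.length 2
  · obtain _ | ⟨x, _ | ⟨y, t⟩⟩ := w
    · simp at hcop
    · cases x <;> simp [IsLowerChristoffel]
    · simp at hn
  obtain ⟨m, hm, rfl⟩ := (exists_palindrome_eq_iff hn).mpr fun k hk0 hkn =>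
    hw.height_reverse_eq hcop hk0 hkn
  refine Or.inr (Or.inr ⟨m, ⟨hm, hw.balancedWord, ?_⟩, rfl⟩)
  simpa [hm] using BalancedWord.reverse hw.balancedWord

end IsMechanical

theorem _root_.IsLowerChristoffel.isMechanical_and_coprime {w : List Bool}
    (hw : IsLowerChristoffel w) :
    IsMechanical w ∧ Nat.Coprime (w.count true) w.length := by
  rcases hw with rfl | rfl | ⟨m, ⟨hm, hbal, -⟩, rfl⟩
  iterate 2
    refine ⟨fun k hk => ?_, by decide⟩
    simp only [List.length_singleton] at hk
    interval_cases k <;> rfl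
  have hn : 2 ≤ (false :: (m ++ [true])).length := by simp
  have hrev := (exists_palindrome_eq_iff hn).mp ⟨m, hm, rfl⟩
  exact eq_div_and_coprime_of_balanced (by omega) (height_zero _) (height_of_length_le le_rfl)
    (fun i hi0 hin => by have := height_reverse hin.le; rw [hrev i hi0 hin] at this; omega)
    (balancedWord_iff.mp hbal)

lemma ediv_eq_ediv_of_det {n1 n2 b d k : ℤ} (hn1 : 0 < n1) (hn2 : 0 < n2)
    (hdet : n1 * d = b * n2 + 1) (hk0 : 0 ≤ k) (hk : k ≤ n1) :
    k * (b + d) / (n1 + n2) = k * b / n1 := by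
  have hq := Int.mul_ediv_self_le (x := k * b) hn1.ne'
  have hq' := Int.lt_mul_ediv_self_add (x := k * b) hn1
  set q := k * b / n1
  have key : n1 * (k * (b + d)) = (n1 + n2) * (k * b) + k := by linear_combination k * hdet
  rw [Int.ediv_eq_iff_of_pos (by omega)]
  constructor
  · refine le_of_mul_le_mul_left ?_ hn1
    nlinarith
  · refine lt_of_mul_lt_mul_left ?_ hn1.le
    nlinarith

lemma ediv_eq_add_ediv_of_det {n1 n2 b d j : ℤ} (hn1 : 0 < n1) (hn2 : 0 < n2)
    (hdet : n1 * d = b * n2 + 1) (hj0 : 0 ≤ j) (hj : j ≤ n2) :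
    (n1 + j) * (b + d) / (n1 + n2) = b + j * d / n2 := by
  have hq := Int.mul_ediv_self_le (x := j * d) hn2.ne'
  have hq' := Int.lt_mul_ediv_self_add (x := j * d) hn2
  set q := j * d / n2
  have key : n2 * ((n1 + j) * (b + d)) = (n1 + n2) * (b * n2 + j * d) + (n2 - j) := by
    linear_combination (n2 - j) * hdet
  rw [Int.ediv_eq_iff_of_pos (by omega)]
  constructor
  · refine le_of_mul_le_mul_left ?_ hn2
    nlinarith
  · refine lt_of_mul_lt_mul_left ?_ hn2.le
    nlinarith

lemma det_eq_one_of_dvd {n1 n2 b d D k j : ℤ} (hn1 : 0 < n1) (hn2 : 0 < n2) (hD : 0 < D)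
    (hb : IsCoprime b n1) (hd : IsCoprime d n2) (hdet : n1 * d - b * n2 = D)
    (hk0 : 0 < k) (hkD : k * D < n1 + n2) (hk : n1 ∣ k * b + 1)
    (hj0 : 0 < j) (hjD : j * D < n1 + n2) (hj : n2 ∣ j * d - 1) : D = 1 := by
  -- `k D ≡ n₂ (mod n₁)` and `j D ≡ n₁ (mod n₂)`, so the bounds force `k D = n₂` or `j D = n₁`.
  obtain ⟨e, he⟩ := hk
  obtain ⟨f, hf⟩ := hj
  have ht : k * D = n2 + n1 * (k * d - n2 * e) := by linear_combination -k * hdet - n2 * he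
  have hs : j * D = n1 + n2 * (n1 * f - j * b) := by linear_combination -j * hdet + n1 * hf
  have hunit : ∀ {x y}, IsCoprime x y → D ∣ x → D ∣ y → D = 1 := fun hxy hx hy =>
    (Int.isUnit_iff.mp (hxy.isUnit_of_dvd' hx hy)).resolve_right (by omega)
  rcases lt_or_eq_of_le (show k * d - n2 * e ≤ 0 by nlinarith) with ht' | ht'
  · rcases lt_or_eq_of_le (show n1 * f - j * b ≤ 0 by nlinarith) with hs' | hs'
    · nlinarith [mul_pos hk0 hD, mul_pos hj0 hD]
    · refine hunit hb ⟨f, ?_⟩ ⟨j, by linear_combination -hs - n2 * hs'⟩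
      refine mul_left_cancel₀ hn2.ne' ?_
      linear_combination -hdet + D * hf - d * hs - d * n2 * hs'
  · refine hunit hd ⟨e, ?_⟩ ⟨k, by linear_combination -ht - n1 * ht'⟩
    refine mul_left_cancel₀ hn1.ne' ?_
    linear_combination hdet + D * he - b * ht - b * n1 * ht'

lemma det_eq_one_of_ediv {n1 n2 b d : ℤ} (hn1 : 0 < n1) (hn2 : 0 < n2)
    (hb : IsCoprime b n1) (hd : IsCoprime d n2) (hbd : IsCoprime (b + d) (n1 + n2))
    (H1 : ∀ k, 0 ≤ k → k ≤ n1 → k * (b + d) / (n1 + n2) = k * b / n1)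
    (H2 : ∀ j, 0 ≤ j → j ≤ n2 → (n1 + j) * (b + d) / (n1 + n2) = b + j * d / n2) :
    n1 * d = b * n2 + 1 := by
  have hN : 0 < n1 + n2 := by omega
  set D := n1 * d - b * n2 with hD
  have hDpos : 0 < D := by
    have h := H1 n1 hn1.le le_rfl
    rw [Int.mul_ediv_cancel_left _ hn1.ne', Int.ediv_eq_iff_of_pos hN] at h
    refine lt_of_le_of_ne (by nlinarith [h.1]) fun hzero => ?_
    have := Int.le_of_dvd hn1 (hbd.symm.dvd_of_dvd_mul_right ⟨b, by linear_combination -hzero⟩)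
    omega
  -- After `k` letters, where `k b ≡ -1 (mod n₁)`, the path of `u` is closest to its chord; it
  -- stays below the chord of `uv` only if `k D < n₁ + n₂`. Symmetrically for `v` at `n₂ - j`.
  obtain ⟨k, hk0, hkn, hk⟩ := hb.exists_dvd_mul_add hn1 1
  obtain ⟨j, hj0, hjn, hj⟩ := hd.exists_dvd_mul_add hn2 (-1)
  have hkD : k * D < n1 + n2 := by
    obtain ⟨e, he⟩ := hk
    have h := H1 k hk0.le hkn
    have hfloor : k * b / n1 = e - 1 := by
      rw [Int.ediv_eq_iff_of_pos hn1]; constructor <;> linarith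
    rw [hfloor, Int.ediv_eq_iff_of_pos hN] at h
    nlinarith [mul_lt_mul_of_pos_left h.2 hn1]
  have hjD : j * D < n1 + n2 := by
    obtain ⟨f, hf⟩ := hj
    have h := H2 (n2 - j) (by omega) (by omega)
    have hfloor : (n2 - j) * d / n2 = d - f - 1 := by
      rw [Int.ediv_eq_iff_of_pos hn2]; constructor <;> linarith
    rw [hfloor, Int.ediv_eq_iff_of_pos hN] at h
    nlinarith [mul_lt_mul_of_pos_left h.2 hn2]
  have := det_eq_one_of_dvd hn1 hn2 hDpos hb hd hD.symm hk0 hkD hk hj0 hjD (by rwa [sub_eq_add_neg])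
  omega

lemma length_pos_of_coprime {w : List Bool} (h : Nat.Coprime (w.count true) w.length) :
    0 < w.length := by
  refine Nat.pos_of_ne_zero fun h0 => ?_
  rw [h0, Nat.coprime_zero_right] at h
  have := List.count_le_length (a := true) (l := w)
  omega

namespace IsMechanical

variable {u v : List Bool}

theorem append (hu : IsMechanical u) (hv : IsMechanical v)
    (hdet : u.length * v.count true = u.count true * v.length + 1) : IsMechanical (u ++ v) := by
  have hn1 : 0 < u.length := Nat.pos_of_ne_zero fun h => by simp [h] at hdet
  have hn2 : 0 < v.length := Nat.pos_of_ne_zero fun h => by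
    simp [List.length_eq_zero_iff.mp h] at hdet
  have hdet' : (u.length : ℤ) * v.count true = u.count true * v.length + 1 := by
    exact_mod_cast hdet
  intro k hk
  rw [List.length_append] at hk
  rw [List.length_append, List.count_append]
  rcases le_or_gt k u.length with hk1 | hk1
  · rw [height_append_of_le hk1, hu k hk1]
    exact_mod_cast (ediv_eq_ediv_of_det (by exact_mod_cast hn1) (by exact_mod_cast hn2) hdet'
      (Nat.cast_nonneg k) (by exact_mod_cast hk1)).symm
  · obtain ⟨j, rfl⟩ : ∃ j, k = u.length + j := ⟨k - u.length, by omega⟩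
    rw [height_append_length_add, hv j (by omega)]
    exact_mod_cast (ediv_eq_add_ediv_of_det (by exact_mod_cast hn1) (by exact_mod_cast hn2) hdet'
      (Nat.cast_nonneg j) (by exact_mod_cast (show j ≤ v.length by omega))).symm

theorem det_eq_one (hu : IsMechanical u) (hv : IsMechanical v) (huv : IsMechanical (u ++ v))
    (hcu : Nat.Coprime (u.count true) u.length) (hcv : Nat.Coprime (v.count true) v.length)
    (hcuv : Nat.Coprime ((u ++ v).count true) (u ++ v).length) :
    u.length * v.count true = u.count true * v.length + 1 := by
  rw [List.count_append, List.length_append] at hcuv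
  have key := det_eq_one_of_ediv (n1 := u.length) (n2 := v.length) (b := u.count true)
    (d := v.count true) (by exact_mod_cast length_pos_of_coprime hcu)
    (by exact_mod_cast length_pos_of_coprime hcv) (Nat.isCoprime_iff_coprime.mpr hcu)
    (Nat.isCoprime_iff_coprime.mpr hcv) (by exact_mod_cast Nat.isCoprime_iff_coprime.mpr hcuv)
    (fun k hk0 hk => by
      lift k to ℕ using hk0
      have := huv k (by simp; omega)
      rw [height_append_of_le (by exact_mod_cast hk), hu k (by exact_mod_cast hk),
        List.count_append, List.length_append] at this
      exact_mod_cast this.symm)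
    (fun j hj0 hj => by
      lift j to ℕ using hj0
      have := huv (u.length + j) (by simp; omega)
      rw [height_append_length_add, hv j (by exact_mod_cast hj),
        List.count_append, List.length_append] at this
      exact_mod_cast this.symm)
  exact_mod_cast key

theorem isLowerChristoffel_append (hu : IsMechanical u) (hv : IsMechanical v)
    (hdet : u.length * v.count true = u.count true * v.length + 1) :
    IsLowerChristoffel (u ++ v) := by
  refine (hu.append hv hdet).isLowerChristoffel ?_
  rw [List.count_append, List.length_append, ← Nat.isCoprime_iff_coprime]
  have hdet' : (u.length : ℤ) * v.count true = u.count true * v.length + 1 := by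
    exact_mod_cast hdet
  refine ⟨u.length, -u.count true, ?_⟩
  push_cast
  linear_combination hdet'

end IsMechanical

end Christoffel

/-- If `u`, `v`, `uv` are lower Christoffel words, then so are `u²v` and `uv²`. -/
theorem christoffel_uuv_uvv (u v : List Bool)
    (hu : IsLowerChristoffel u) (hv : IsLowerChristoffel v)
    (huv : IsLowerChristoffel (u ++ v)) :
    IsLowerChristoffel (u ++ u ++ v) ∧ IsLowerChristoffel (u ++ (v ++ v)) := by
  obtain ⟨hmu, hcu⟩ := hu.isMechanical_and_coprime
  obtain ⟨hmv, hcv⟩ := hv.isMechanical_and_coprime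
  obtain ⟨hmuv, hcuv⟩ := huv.isMechanical_and_coprime
  have hdet := hmu.det_eq_one hmv hmuv hcu hcv hcuv
  constructor
  · rw [List.append_assoc]
    refine hmu.isLowerChristoffel_append hmuv ?_
    simp only [List.count_append, List.length_append]
    linarith
  · rw [← List.append_assoc]
    refine hmuv.isLowerChristoffel_append hmv ?_
    simp only [List.count_append, List.length_append]
    linarith
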